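/- Pseudo-population factorization for restricted stabilized weights (equation (B.3.1)): Assume (A2′) and (A3′). Then for every a̲, b̲ ∈ {0,1}^m and every Borel set B ⊆ ℝ: 𝔼[W_rsw^(m) · 1{Y^{a̲} ∈ B} · 1{A̲(K−m) = b̲}] = P(Y^{a̲} ∈ B) · P(A̲(K−m) = b̲). That is, in the pseudo-population obtained by weighting by W_rsw^(m), the potential outcome Y^{a̲} and the recent treatment history A̲(K−m) are independent, each retaining its original marginal distribution. -/

import Mathlib

open MeasureTheory Finset
open scoped Classical

namespace MSMPaper

noncomputable section

variable {Ω : Type*} [MeasurableSpace Ω] {𝓛 : Type*}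

/-- Conditional probability `P(E | F) = P(E ∩ F) / P(F)` as a real number
(junk value `0` when `P F = 0`). -/
def cP (P : Measure Ω) (E F : Set Ω) : ℝ := (P (E ∩ F)).toReal / (P F).toReal

variable {K : ℕ}

/-- Event `Ā(t−1) = b̄` (treatment history up to, not including, time `t`). -/
def Apast (A : Fin K → Ω → Bool) (t : ℕ) (b : Fin K → Bool) : Set Ω :=
  {ω | ∀ k : Fin K, (k : ℕ) < t → A k ω = b k}

/-- Event `L̄(t) = l̄` (covariate history up to and including time `t`). -/
def Lpast (L : Fin K → Ω → 𝓛) (t : ℕ) (l : Fin K → 𝓛) : Set Ω :=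
  {ω | ∀ k : Fin K, (k : ℕ) ≤ t → L k ω = l k}

/-- Event `A̲(s, t−1) = b` (treatment history from time `s` up to, not including, `t`). -/
def Aseg (A : Fin K → Ω → Bool) (s t : ℕ) (b : Fin K → Bool) : Set Ω :=
  {ω | ∀ k : Fin K, s ≤ (k : ℕ) → (k : ℕ) < t → A k ω = b k}

/-- Event `A̲(K−m) = a̲` for a (last-`m`) treatment vector `as`. -/
def EtrV (A : Fin K → Ω → Bool) (m : ℕ) (as : Fin K → Bool) : Set Ω :=
  {ω | ∀ k : Fin K, K - m ≤ (k : ℕ) → A k ω = as k}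

/-- Event `A̲(K−m) = a_m` (constant `a` on the last `m` coordinates). -/
def Etr (A : Fin K → Ω → Bool) (m : ℕ) (a : Bool) : Set Ω :=
  EtrV A m (fun _ => a)

/-- Stabilized weights `W_sw`. -/
def Wsw (P : Measure Ω) (A : Fin K → Ω → Bool) (L : Fin K → Ω → 𝓛) : Ω → ℝ :=
  fun ω => ∏ k : Fin K,
    cP P {ω' | A k ω' = A k ω} (Apast A (k : ℕ) (fun j => A j ω)) /
      cP P {ω' | A k ω' = A k ω}
        (Lpast L (k : ℕ) (fun j => L j ω) ∩ Apast A (k : ℕ) (fun j => A j ω))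

/-- Restricted stabilized weights `W_rsw^(m)`. -/
def Wrsw (P : Measure Ω) (A : Fin K → Ω → Bool) (L : Fin K → Ω → 𝓛) (m : ℕ) : Ω → ℝ :=
  fun ω => ∏ k ∈ Finset.univ.filter (fun k : Fin K => K - m ≤ (k : ℕ)),
    cP P {ω' | A k ω' = A k ω} (Aseg A (K - m) (k : ℕ) (fun j => A j ω)) /
      cP P {ω' | A k ω' = A k ω}
        (Lpast L (k : ℕ) (fun j => L j ω) ∩ Apast A (k : ℕ) (fun j => A j ω))

/-- Partial stabilized weights `W_psw^(m)`. -/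
def Wpsw (P : Measure Ω) (A : Fin K → Ω → Bool) (L : Fin K → Ω → 𝓛) (m : ℕ) : Ω → ℝ :=
  fun ω => ∏ k ∈ Finset.univ.filter (fun k : Fin K => K - m ≤ (k : ℕ)),
    cP P {ω' | A k ω' = A k ω} (Apast A (k : ℕ) (fun j => A j ω)) /
      cP P {ω' | A k ω' = A k ω}
        (Lpast L (k : ℕ) (fun j => L j ω) ∩ Apast A (k : ℕ) (fun j => A j ω))

/-- IP-weighted contrast `θ_W^(m)`. -/
def θW (P : Measure Ω) (A : Fin K → Ω → Bool) (m : ℕ) (W Y : Ω → ℝ) : ℝ :=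
  (∫ ω in Etr A m true, W ω * Y ω ∂P) / (∫ ω in Etr A m true, W ω ∂P) -
    (∫ ω in Etr A m false, W ω * Y ω ∂P) / (∫ ω in Etr A m false, W ω ∂P)

/-- `rev j` is the time index `K − 1 − j`; the paper's coefficient `ψ_{j+1}`
multiplies `a(K − (j+1)) = a(rev j)`. -/
def rev (j : Fin K) : Fin K := ⟨K - 1 - (j : ℕ), by have := j.isLt; omega⟩

/-- `θ^(K) = 𝔼[Y^{1_K}] − 𝔼[Y^{0_K}]`. -/
def θKfull (P : Measure Ω) (Ypot : (Fin K → Bool) → Ω → ℝ) : ℝ :=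
  (∫ ω, Ypot (fun _ => true) ω ∂P) - ∫ ω, Ypot (fun _ => false) ω ∂P

/-- (A1) consistency. -/
def A1ok (A : Fin K → Ω → Bool) (Y : Ω → ℝ) (Ypot : (Fin K → Bool) → Ω → ℝ) : Prop :=
  ∀ (a : Fin K → Bool) (ω : Ω), (∀ k, A k ω = a k) → Y ω = Ypot a ω

/-- (A2) sequential exchangeability. -/
def A2ok (P : Measure Ω) (A : Fin K → Ω → Bool) (L : Fin K → Ω → 𝓛)
    (Ypot : (Fin K → Bool) → Ω → ℝ) : Prop :=
  ∀ (t : Fin K) (a : Fin K → Bool) (B : Set ℝ), MeasurableSet B →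
    ∀ (av : Bool) (l : Fin K → 𝓛) (b : Fin K → Bool),
      0 < P (Lpast L (t : ℕ) l ∩ Apast A (t : ℕ) b) →
      cP P ({ω | Ypot a ω ∈ B} ∩ {ω | A t ω = av}) (Lpast L (t : ℕ) l ∩ Apast A (t : ℕ) b) =
        cP P {ω | Ypot a ω ∈ B} (Lpast L (t : ℕ) l ∩ Apast A (t : ℕ) b) *
          cP P {ω | A t ω = av} (Lpast L (t : ℕ) l ∩ Apast A (t : ℕ) b)

/-- (A3) positivity. -/
def A3ok (P : Measure Ω) (A : Fin K → Ω → Bool) (L : Fin K → Ω → 𝓛) : Prop :=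
  ∀ (t : Fin K) (av : Bool) (l : Fin K → 𝓛) (b : Fin K → Bool),
    0 < P (Lpast L (t : ℕ) l ∩ Apast A (t : ℕ) b) →
    0 < cP P {ω | A t ω = av} (Lpast L (t : ℕ) l ∩ Apast A (t : ℕ) b)

/-- The marginal structural model `𝔼[Y^{ā}] = ψ₀ + Σ_{j=1}^K ψ_j a(K−j)`;
here `ψ j` is the paper's `ψ_{j+1}`, the coefficient of `a(K−1−j)`. -/
def MSMeq (P : Measure Ω) (Ypot : (Fin K → Bool) → Ω → ℝ) (ψ0 : ℝ) (ψ : Fin K → ℝ) : Prop :=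
  ∀ a : Fin K → Bool,
    (∫ ω, Ypot a ω ∂P) = ψ0 + ∑ j : Fin K, ψ j * (if a (rev j) = true then 1 else 0)

/-- (A5) conditional MSM given the past treatment history `Ā(K−m−1)`. -/
def A5ok (P : Measure Ω) (A : Fin K → Ω → Bool) (Ypot : (Fin K → Bool) → Ω → ℝ)
    (m : ℕ) : Prop :=
  ∀ b : Fin K → Bool, 0 < P (Apast A (K - m) b) →
    ∃ (φ0 : ℝ) (φ : Fin K → ℝ), ∀ a : Fin K → Bool,
      (∫ ω in Apast A (K - m) b, Ypot a ω ∂P) / (P (Apast A (K - m) b)).toReal =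
        φ0 + ∑ j : Fin K, φ j * (if a (rev j) = true then 1 else 0)

/-- `q_{j+1} = P(A(K−1−j)=1 | A̲(K−m)=1_m) − P(A(K−1−j)=1 | A̲(K−m)=0_m)`. -/
def qcoef (P : Measure Ω) (A : Fin K → Ω → Bool) (m : ℕ) (j : Fin K) : ℝ :=
  cP P {ω | A (rev j) ω = true} (Etr A m true) -
    cP P {ω | A (rev j) ω = true} (Etr A m false)

end

noncomputable section

variable {Ω : Type*} [MeasurableSpace Ω] {K : ℕ}

/-- `Y^{a̲}(ω) = Y^{(Ā(K−m−1)(ω), a̲)}(ω)`. -/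
def Ypotm (A : Fin K → Ω → Bool) (m : ℕ) (Ypot : (Fin K → Bool) → Ω → ℝ)
    (as : Fin K → Bool) : Ω → ℝ :=
  fun ω => Ypot (fun k => if (k : ℕ) < K - m then A k ω else as k) ω

end

/-!
On the event `A̲(K−m) = b̲` the numerator of `W_rsw^(m)` is a constant, which telescopes by the
chain rule to `P(A̲(K−m) = b̲)`; the denominator is the product of the propensities
`P(A(k) = b(k) | L̄(k), Ā(k−1))`. It therefore suffices that the product of the inverse
propensities over `K−m ≤ k < t`, restricted to `{Y^{a̲} ∈ B, A̲(K−m, t−1) = b̲}`, integrates to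
`P(Y^{a̲} ∈ B)` for every `t`. Passing from `t` to `t+1` does not change the integral over any
atom of the history `(L̄(t), Ā(t−1))`: there the weight gains the constant factor
`1 / P(A(t) = b(t) | atom)`, while the region shrinks by the event `A(t) = b(t)`, whose
conditional probability factors out of `P(Y^{a̲} ∈ B, A(t) = b(t) | atom)` by (A2′) and is
nonzero by (A3′).
-/

section ConditionalProbability

variable {Ω : Type*} [MeasurableSpace Ω] {P : Measure Ω} [IsFiniteMeasure P] {D E F : Set Ω}

lemma cP_mul_measureReal (E D : Set Ω) : cP P E D * P.real D = P.real (E ∩ D) := by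
  by_cases hD : P.real D = 0
  · rw [hD, mul_zero, measureReal_mono_null Set.inter_subset_right hD]
  · exact div_mul_cancel₀ _ hD

lemma measureReal_inter_mul_inv_cP
    (hindep : 0 < P D → cP P (E ∩ F) D = cP P E D * cP P F D) (hpos : 0 < P D → 0 < cP P F D) :
    P.real (E ∩ F ∩ D) * (cP P F D)⁻¹ = P.real (E ∩ D) := by
  rcases eq_zero_or_pos (P D) with hD | hD
  · have hD' : P.real D = 0 := (measureReal_eq_zero_iff).2 hD
    rw [measureReal_mono_null Set.inter_subset_right hD',
      measureReal_mono_null Set.inter_subset_right hD', zero_mul]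
  · rw [← cP_mul_measureReal, hindep hD, ← cP_mul_measureReal]
    field_simp [(hpos hD).ne']

end ConditionalProbability

section Fibers

variable {Ω β : Type*} [MeasurableSpace Ω] [Fintype β] {μ : Measure Ω}

lemma integral_eq_sum_integral_indicator_fiber (H : Ω → β) {f : Ω → ℝ}
    (hf : ∀ p, Integrable ({ω | H ω = p}.indicator f) μ) :
    ∫ ω, f ω ∂μ = ∑ p, ∫ ω, {ω | H ω = p}.indicator f ω ∂μ := by
  rw [← integral_finsetSum _ fun p _ => hf p]
  congr 1
  ext ω
  simp [Set.indicator_apply]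

lemma integral_eq_of_forall_fiber (H : Ω → β) {S : Set Ω} {f g : Ω → ℝ}
    (hfS : f.support ⊆ S) (hgS : g.support ⊆ S)
    (hfi : ∀ ω₀ ∈ S, Integrable ({ω | H ω = H ω₀}.indicator f) μ)
    (hgi : ∀ ω₀ ∈ S, Integrable ({ω | H ω = H ω₀}.indicator g) μ)
    (hfg : ∀ ω₀ ∈ S, ∫ ω, {ω | H ω = H ω₀}.indicator f ω ∂μ =
      ∫ ω, {ω | H ω = H ω₀}.indicator g ω ∂μ) :
    ∫ ω, f ω ∂μ = ∫ ω, g ω ∂μ := by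
  have hfiber : ∀ p, (∃ ω₀ ∈ S, H ω₀ = p) ∨
      ({ω | H ω = p}.indicator f = 0 ∧ {ω | H ω = p}.indicator g = 0) := by
    refine fun p => or_iff_not_imp_left.2 fun hp => ?_
    have hzero : ∀ h : Ω → ℝ, h.support ⊆ S → {ω | H ω = p}.indicator h = 0 := fun h hS =>
      Set.indicator_eq_zero.2 <| Set.disjoint_left.2 fun ω hω hHω => hp ⟨ω, hS hω, hHω⟩
    exact ⟨hzero f hfS, hzero g hgS⟩
  have key : ∀ p, Integrable ({ω | H ω = p}.indicator f) μ ∧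
      Integrable ({ω | H ω = p}.indicator g) μ ∧
      ∫ ω, {ω | H ω = p}.indicator f ω ∂μ = ∫ ω, {ω | H ω = p}.indicator g ω ∂μ := by
    intro p
    rcases hfiber p with ⟨ω₀, hω₀, rfl⟩ | ⟨hf0, hg0⟩
    · exact ⟨hfi ω₀ hω₀, hgi ω₀ hω₀, hfg ω₀ hω₀⟩
    · rw [hf0, hg0]
      exact ⟨integrable_zero _ _ _, integrable_zero _ _ _, rfl⟩
  rw [integral_eq_sum_integral_indicator_fiber H fun p => (key p).1,
    integral_eq_sum_integral_indicator_fiber H fun p => (key p).2.1]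
  exact Finset.sum_congr rfl fun p _ => (key p).2.2

end Fibers

section Histories

variable {Ω 𝓛 : Type*} {K : ℕ} (A : Fin K → Ω → Bool) (L : Fin K → Ω → 𝓛)

def historyCell (t : ℕ) (ω₀ : Ω) : Set Ω :=
  Lpast L t (fun j => L j ω₀) ∩ Apast A t (fun j => A j ω₀)

def history (t : ℕ) (ω : Ω) :
    ({k : Fin K // (k : ℕ) ≤ t} → 𝓛) × ({k : Fin K // (k : ℕ) < t} → Bool) :=
  (fun k => L k ω, fun k => A k ω)

def window (s t : ℕ) : Finset (Fin K) :=
  univ.filter fun k => s ≤ (k : ℕ) ∧ (k : ℕ) < t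

variable {A L} {s t : ℕ} {b : Fin K → Bool} {ω ω₀ : Ω}

lemma setOf_history_eq (t : ℕ) (ω₀ : Ω) :
    {ω | history A L t ω = history A L t ω₀} = historyCell A L t ω₀ := by
  ext ω
  simp [history, historyCell, Lpast, Apast, funext_iff]

lemma historyCell_eq_of_mem (h : ω ∈ historyCell A L t ω₀) {k : ℕ} (hk : k ≤ t) :
    historyCell A L k ω = historyCell A L k ω₀ := by
  ext ω'
  simp only [historyCell, Lpast, Apast, Set.mem_inter_iff]
  refine and_congr (forall_congr' fun j => imp_congr_right fun hj => ?_)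
    (forall_congr' fun j => imp_congr_right fun hj => ?_)
  · rw [h.1 j (hj.trans hk)]
  · rw [h.2 j (hj.trans_le hk)]

lemma Aseg_congr {s t : ℕ} {b b' : Fin K → Bool}
    (h : ∀ k : Fin K, s ≤ (k : ℕ) → (k : ℕ) < t → b k = b' k) :
    Aseg A s t b = Aseg A s t b' := by
  ext ω
  exact forall_congr' fun k => forall_congr' fun hsk => forall_congr' fun hkt => by
    rw [h k hsk hkt]

lemma historyCell_subset_Aseg (hω₀ : ω₀ ∈ Aseg A s t b) : historyCell A L t ω₀ ⊆ Aseg A s t b :=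
  fun _ h k hsk hkt => (h.2 k hkt).trans (hω₀ k hsk hkt)

lemma Aseg_self (s : ℕ) (b : Fin K → Bool) : Aseg A s s b = Set.univ :=
  Set.eq_univ_of_forall fun _ _ hsk hks => absurd hsk (not_le.2 hks)

lemma Aseg_succ (hst : s ≤ t) (htK : t < K) :
    Aseg A s (t + 1) b = {ω | A ⟨t, htK⟩ ω = b ⟨t, htK⟩} ∩ Aseg A s t b := by
  ext ω
  refine ⟨fun h => ⟨h _ hst t.lt_succ_self, fun k hsk hkt => h k hsk (hkt.trans t.lt_succ_self)⟩,
    fun ⟨ht, h⟩ k hsk hkt => ?_⟩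
  rcases (Nat.lt_succ_iff.1 hkt).lt_or_eq with hkt | hkt
  · exact h k hsk hkt
  · obtain rfl : k = ⟨t, htK⟩ := Fin.ext hkt
    exact ht

lemma Aseg_anti {u : ℕ} (htu : t ≤ u) : Aseg A s u b ⊆ Aseg A s t b :=
  fun _ h k hsk hkt => h k hsk (hkt.trans_le htu)

lemma EtrV_eq_Aseg (m : ℕ) (b : Fin K → Bool) : EtrV A m b = Aseg A (K - m) K b := by
  ext ω
  exact forall_congr' fun k => ⟨fun h hk _ => h hk, fun h hk => h hk k.isLt⟩

lemma window_self (s : ℕ) : window (K := K) s s = ∅ :=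
  filter_false_of_mem fun _ _ h => absurd h.1 (not_le.2 h.2)

lemma window_eq_filter_le (s : ℕ) : window s K = univ.filter fun k : Fin K => s ≤ (k : ℕ) :=
  filter_congr fun k _ => and_iff_left k.isLt

lemma prod_window_succ {M : Type*} [CommMonoid M] (f : Fin K → M) (hst : s ≤ t) (htK : t < K) :
    ∏ k ∈ window s (t + 1), f k = f ⟨t, htK⟩ * ∏ k ∈ window s t, f k := by
  have : window s (t + 1) = cons ⟨t, htK⟩ (window s t) (by simp [window]) := by
    ext k
    simp [window, Fin.ext_iff]
    omega
  rw [this, prod_cons]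

end Histories

section Weights

variable {Ω 𝓛 : Type*} [MeasurableSpace Ω] {K : ℕ}
  (P : Measure Ω) (A : Fin K → Ω → Bool) (L : Fin K → Ω → 𝓛)

noncomputable def propensity (k : Fin K) (ω : Ω) : ℝ :=
  cP P {ω' | A k ω' = A k ω} (historyCell A L k ω)

noncomputable def ipWeight (s t : ℕ) (ω : Ω) : ℝ :=
  ∏ k ∈ window s t, (propensity P A L k ω)⁻¹

variable {P A L} {s t : ℕ} {ω ω₀ : Ω}

lemma propensity_eq_of_mem_historyCell (h : ω ∈ historyCell A L t ω₀) {k : Fin K}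
    (hk : (k : ℕ) < t) : propensity P A L k ω = propensity P A L k ω₀ := by
  rw [propensity, propensity, historyCell_eq_of_mem h hk.le, h.2 k hk]

lemma ipWeight_eq_of_mem_historyCell (h : ω ∈ historyCell A L t ω₀) :
    ipWeight P A L s t ω = ipWeight P A L s t ω₀ :=
  prod_congr rfl fun k hk =>
    by rw [propensity_eq_of_mem_historyCell h (mem_filter.1 hk).2.2]

lemma Wrsw_eq_mul_ipWeight {m : ℕ} {b : Fin K → Bool} (hω : ω ∈ EtrV A m b) :
    Wrsw P A L m ω = (∏ k ∈ window (K - m) K, cP P {ω' | A k ω' = b k} (Aseg A (K - m) k b)) *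
      ipWeight P A L (K - m) K ω := by
  rw [Wrsw, ipWeight, window_eq_filter_le, ← prod_mul_distrib]
  refine prod_congr rfl fun k hk => ?_
  rw [div_eq_mul_inv]
  congr 1
  rw [hω k (mem_filter.1 hk).2, Aseg_congr fun j hj _ => hω j hj]

end Weights

section Measurability

variable {Ω 𝓛 : Type*} [MeasurableSpace Ω] {K : ℕ} {A : Fin K → Ω → Bool}

lemma measurableSet_Apast (hA : ∀ k, Measurable (A k)) (t : ℕ) (b : Fin K → Bool) :
    MeasurableSet (Apast A t b) := by
  simp only [Apast, Set.ofPred_forall]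
  exact .iInter fun k => .iInter fun _ => hA k (measurableSet_singleton _)

lemma measurableSet_Lpast [MeasurableSpace 𝓛] [MeasurableSingletonClass 𝓛]
    {L : Fin K → Ω → 𝓛} (hL : ∀ k, Measurable (L k)) (t : ℕ) (l : Fin K → 𝓛) :
    MeasurableSet (Lpast L t l) := by
  simp only [Lpast, Set.ofPred_forall]
  exact .iInter fun k => .iInter fun _ => hL k (measurableSet_singleton _)

lemma measurableSet_historyCell [MeasurableSpace 𝓛] [MeasurableSingletonClass 𝓛]
    {L : Fin K → Ω → 𝓛} (hA : ∀ k, Measurable (A k)) (hL : ∀ k, Measurable (L k))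
    (t : ℕ) (ω₀ : Ω) : MeasurableSet (historyCell A L t ω₀) :=
  (measurableSet_Lpast hL t _).inter (measurableSet_Apast hA t _)

lemma measurable_Ypotm (hA : ∀ k, Measurable (A k)) {Ypot : (Fin K → Bool) → Ω → ℝ}
    (hYpot : ∀ a, Measurable (Ypot a)) (m : ℕ) (as : Fin K → Bool) :
    Measurable (Ypotm A m Ypot as) := by
  have hpath : Measurable fun ω => fun k : Fin K => if (k : ℕ) < K - m then A k ω else as k :=
    measurable_pi_lambda _ fun k => by split_ifs; exacts [hA k, measurable_const]
  exact (measurable_from_prod_countable_right (f := fun p : (Fin K → Bool) × Ω => Ypot p.1 p.2)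
    hYpot).comp (hpath.prodMk measurable_id)

end Measurability

section Factorization

variable {Ω 𝓛 : Type*} [MeasurableSpace Ω] {K : ℕ} {P : Measure Ω}
  {A : Fin K → Ω → Bool} {L : Fin K → Ω → 𝓛} {s t : ℕ} {b : Fin K → Bool} {E : Set Ω} {ω₀ : Ω}

lemma ipWeight_self (s : ℕ) : ipWeight P A L s s = 1 :=
  funext fun _ => by simp [ipWeight, window_self]

lemma ipWeight_succ (hst : s ≤ t) (htK : t < K) (ω : Ω) :
    ipWeight P A L s (t + 1) ω = (propensity P A L ⟨t, htK⟩ ω)⁻¹ * ipWeight P A L s t ω :=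
  prod_window_succ _ hst htK

lemma indicator_historyCell_ipWeight (hω₀ : ω₀ ∈ Aseg A s t b) :
    (historyCell A L t ω₀).indicator ((E ∩ Aseg A s t b).indicator (ipWeight P A L s t)) =
      (E ∩ historyCell A L t ω₀).indicator fun _ => ipWeight P A L s t ω₀ := by
  have hcell := historyCell_subset_Aseg (L := L) hω₀
  rw [Set.indicator_indicator,
    show historyCell A L t ω₀ ∩ (E ∩ Aseg A s t b) = E ∩ historyCell A L t ω₀ from
      Set.ext fun ω => ⟨fun h => ⟨h.2.1, h.1⟩, fun h => ⟨h.2, h.1, hcell h.2⟩⟩]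
  exact Set.indicator_congr fun ω hω => ipWeight_eq_of_mem_historyCell hω.2

lemma indicator_historyCell_ipWeight_succ (hst : s ≤ t) (htK : t < K)
    (hω₀ : ω₀ ∈ Aseg A s t b) :
    (historyCell A L t ω₀).indicator
        ((E ∩ Aseg A s (t + 1) b).indicator (ipWeight P A L s (t + 1))) =
      (E ∩ {ω | A ⟨t, htK⟩ ω = b ⟨t, htK⟩} ∩ historyCell A L t ω₀).indicator fun _ =>
        ipWeight P A L s t ω₀ *
          (cP P {ω | A ⟨t, htK⟩ ω = b ⟨t, htK⟩} (historyCell A L t ω₀))⁻¹ := by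
  have hcell := historyCell_subset_Aseg (L := L) hω₀
  rw [Set.indicator_indicator, Aseg_succ hst htK,
    show historyCell A L t ω₀ ∩ (E ∩ ({ω | A ⟨t, htK⟩ ω = b ⟨t, htK⟩} ∩ Aseg A s t b)) =
        E ∩ {ω | A ⟨t, htK⟩ ω = b ⟨t, htK⟩} ∩ historyCell A L t ω₀ from
      Set.ext fun ω => ⟨fun h => ⟨⟨h.2.1, h.2.2.1⟩, h.1⟩,
        fun h => ⟨h.2, h.1.1, h.1.2, hcell h.2⟩⟩]
  refine Set.indicator_congr fun ω hω => ?_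
  rw [ipWeight_succ hst htK, ipWeight_eq_of_mem_historyCell hω.2, propensity, hω.1.2,
    historyCell_eq_of_mem hω.2 le_rfl, mul_comm]

variable [MeasurableSpace 𝓛] [MeasurableSingletonClass 𝓛] [IsFiniteMeasure P]

lemma integral_indicator_historyCell_ipWeight_succ (hA : ∀ k, Measurable (A k))
    (hL : ∀ k, Measurable (L k)) (hE : MeasurableSet E) (hst : s ≤ t) (htK : t < K)
    (hindep : 0 < P (historyCell A L t ω₀) →
      cP P (E ∩ {ω | A ⟨t, htK⟩ ω = b ⟨t, htK⟩}) (historyCell A L t ω₀) =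
        cP P E (historyCell A L t ω₀) *
          cP P {ω | A ⟨t, htK⟩ ω = b ⟨t, htK⟩} (historyCell A L t ω₀))
    (hpos : 0 < P (historyCell A L t ω₀) →
      0 < cP P {ω | A ⟨t, htK⟩ ω = b ⟨t, htK⟩} (historyCell A L t ω₀))
    (hω₀ : ω₀ ∈ Aseg A s t b) :
    ∫ ω, (historyCell A L t ω₀).indicator
        ((E ∩ Aseg A s (t + 1) b).indicator (ipWeight P A L s (t + 1))) ω ∂P =
      ∫ ω, (historyCell A L t ω₀).indicator
        ((E ∩ Aseg A s t b).indicator (ipWeight P A L s t)) ω ∂P := by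
  have hcell := measurableSet_historyCell hA hL t ω₀
  rw [indicator_historyCell_ipWeight_succ hst htK hω₀, indicator_historyCell_ipWeight hω₀,
    integral_indicator_const _ ((hE.inter (measurableSet_eq_fun (hA _) measurable_const)).inter
      hcell), integral_indicator_const _ (hE.inter hcell), smul_eq_mul, smul_eq_mul,
    ← measureReal_inter_mul_inv_cP hindep hpos]
  ring

lemma integral_indicator_Aseg_ipWeight [Fintype 𝓛] (hA : ∀ k, Measurable (A k))
    (hL : ∀ k, Measurable (L k)) (hE : MeasurableSet E)
    (hindep : ∀ τ : Fin K, s ≤ (τ : ℕ) → ∀ ω₀, 0 < P (historyCell A L τ ω₀) →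
      cP P (E ∩ {ω | A τ ω = b τ}) (historyCell A L τ ω₀) =
        cP P E (historyCell A L τ ω₀) * cP P {ω | A τ ω = b τ} (historyCell A L τ ω₀))
    (hpos : ∀ τ : Fin K, s ≤ (τ : ℕ) → ∀ ω₀, 0 < P (historyCell A L τ ω₀) →
      0 < cP P {ω | A τ ω = b τ} (historyCell A L τ ω₀))
    (hst : s ≤ t) (htK : t ≤ K) :
    ∫ ω, (E ∩ Aseg A s t b).indicator (ipWeight P A L s t) ω ∂P = P.real E := by
  induction t, hst using Nat.le_induction with
  | base => rw [Aseg_self, Set.inter_univ, ipWeight_self, integral_indicator_one hE]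
  | succ t hst ih =>
    have htK' : t < K := htK
    have hcell := measurableSet_historyCell hA hL t
    rw [← ih htK'.le]
    refine integral_eq_of_forall_fiber (history A L t)
      (Set.support_indicator_subset.trans (Set.inter_subset_right.trans (Aseg_anti t.le_succ)))
      (Set.support_indicator_subset.trans Set.inter_subset_right)
      (fun ω₀ hω₀ => ?_) (fun ω₀ hω₀ => ?_) fun ω₀ hω₀ => ?_ <;> rw [setOf_history_eq]
    · rw [indicator_historyCell_ipWeight_succ hst htK' hω₀]
      exact (integrable_const _).indicator
        ((hE.inter (measurableSet_eq_fun (hA _) measurable_const)).inter (hcell ω₀))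
    · rw [indicator_historyCell_ipWeight hω₀]
      exact (integrable_const _).indicator (hE.inter (hcell ω₀))
    · exact integral_indicator_historyCell_ipWeight_succ hA hL hE hst htK'
        (hindep ⟨t, htK'⟩ hst ω₀) (hpos ⟨t, htK'⟩ hst ω₀) hω₀

lemma prod_window_cP_Aseg [IsProbabilityMeasure P] (hst : s ≤ t) (htK : t ≤ K) :
    ∏ k ∈ window s t, cP P {ω | A k ω = b k} (Aseg A s k b) = P.real (Aseg A s t b) := by
  induction t, hst using Nat.le_induction with
  | base => simp [window_self, Aseg_self]
  | succ t hst ih =>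
    rw [prod_window_succ _ hst htK, ih (Nat.le_of_succ_le htK), cP_mul_measureReal,
      ← Aseg_succ hst htK]

end Factorization

theorem rsw_pseudopopulation_factorization_general
    {Ω : Type*} [MeasurableSpace Ω] {𝓛 : Type*} [MeasurableSpace 𝓛]
    [Fintype 𝓛] [MeasurableSingletonClass 𝓛]
    (P : Measure Ω) [IsProbabilityMeasure P]
    {K m : ℕ}
    (A : Fin K → Ω → Bool) (L : Fin K → Ω → 𝓛)
    (hA : ∀ k, Measurable (A k)) (hL : ∀ k, Measurable (L k))
    (Ypot : (Fin K → Bool) → Ω → ℝ)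
    (hYpm : ∀ a, Measurable (Ypot a))
    -- (A2′) restricted sequential exchangeability
    (hA2' : ∀ t : Fin K, K - m ≤ (t : ℕ) →
      ∀ (as : Fin K → Bool) (B : Set ℝ), MeasurableSet B →
      ∀ (av : Bool) (l : Fin K → 𝓛) (b : Fin K → Bool),
        0 < P (Lpast L (t : ℕ) l ∩ Apast A (t : ℕ) b) →
        cP P ({ω | Ypotm A m Ypot as ω ∈ B} ∩ {ω | A t ω = av})
            (Lpast L (t : ℕ) l ∩ Apast A (t : ℕ) b) =
          cP P {ω | Ypotm A m Ypot as ω ∈ B} (Lpast L (t : ℕ) l ∩ Apast A (t : ℕ) b) *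
            cP P {ω | A t ω = av} (Lpast L (t : ℕ) l ∩ Apast A (t : ℕ) b))
    -- (A3′) restricted positivity
    (hA3' : ∀ t : Fin K, K - m ≤ (t : ℕ) →
      ∀ (av : Bool) (l : Fin K → 𝓛) (b : Fin K → Bool),
        0 < P (Lpast L (t : ℕ) l ∩ Apast A (t : ℕ) b) →
        0 < cP P {ω | A t ω = av} (Lpast L (t : ℕ) l ∩ Apast A (t : ℕ) b)) :
    ∀ (as bs : Fin K → Bool) (B : Set ℝ), MeasurableSet B →
      (∫ ω, Wrsw P A L m ω * (if Ypotm A m Ypot as ω ∈ B then (1 : ℝ) else 0) *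
          (if ω ∈ EtrV A m bs then (1 : ℝ) else 0) ∂P) =
        (P {ω | Ypotm A m Ypot as ω ∈ B}).toReal * (P (EtrV A m bs)).toReal := by
  intro as bs B hB
  set E := {ω | Ypotm A m Ypot as ω ∈ B}
  have hweighted : ∀ ω, Wrsw P A L m ω * (if Ypotm A m Ypot as ω ∈ B then (1 : ℝ) else 0) *
      (if ω ∈ EtrV A m bs then (1 : ℝ) else 0) =
        (∏ k ∈ window (K - m) K, cP P {ω' | A k ω' = bs k} (Aseg A (K - m) k bs)) *
          (E ∩ EtrV A m bs).indicator (ipWeight P A L (K - m) K) ω := by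
    intro ω
    by_cases hω : ω ∈ EtrV A m bs
    · by_cases hY : Ypotm A m Ypot as ω ∈ B <;>
        simp [E, hω, hY, Wrsw_eq_mul_ipWeight hω]
    · simp [hω]
  simp_rw [hweighted]
  rw [integral_const_mul, EtrV_eq_Aseg,
    integral_indicator_Aseg_ipWeight (E := E) hA hL (measurable_Ypotm hA hYpm m as hB)
      (fun τ hτ ω₀ => hA2' τ hτ as B hB (bs τ) _ _) (fun τ hτ ω₀ => hA3' τ hτ (bs τ) _ _)
      (Nat.sub_le K m) le_rfl,
    prod_window_cP_Aseg (Nat.sub_le K m) le_rfl, mul_comm]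
  rfl

/-- Pseudo-population factorization for restricted stabilized weights (equation (B.3.1)):
under (A2′) and (A3′), weighting by `W_rsw^(m)` makes `Y^{a̲}` and `A̲(K−m)` independent,
each with its original marginal distribution. -/
theorem rsw_pseudopopulation_factorization
    {Ω : Type*} [MeasurableSpace Ω] {𝓛 : Type*} [MeasurableSpace 𝓛]
    [Fintype 𝓛] [Nonempty 𝓛] [MeasurableSingletonClass 𝓛]
    (P : Measure Ω) [IsProbabilityMeasure P]
    {K m : ℕ} (hK : 1 ≤ K) (hm1 : 1 ≤ m) (hmK : m ≤ K)
    (A : Fin K → Ω → Bool) (L : Fin K → Ω → 𝓛)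
    (hA : ∀ k, Measurable (A k)) (hL : ∀ k, Measurable (L k))
    (Ypot : (Fin K → Bool) → Ω → ℝ)
    (hYpm : ∀ a, Measurable (Ypot a)) (hYpi : ∀ a, Integrable (Ypot a) P)
    -- (A2′) restricted sequential exchangeability
    (hA2' : ∀ t : Fin K, K - m ≤ (t : ℕ) →
      ∀ (as : Fin K → Bool) (B : Set ℝ), MeasurableSet B →
      ∀ (av : Bool) (l : Fin K → 𝓛) (b : Fin K → Bool),
        0 < P (Lpast L (t : ℕ) l ∩ Apast A (t : ℕ) b) →
        cP P ({ω | Ypotm A m Ypot as ω ∈ B} ∩ {ω | A t ω = av})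
            (Lpast L (t : ℕ) l ∩ Apast A (t : ℕ) b) =
          cP P {ω | Ypotm A m Ypot as ω ∈ B} (Lpast L (t : ℕ) l ∩ Apast A (t : ℕ) b) *
            cP P {ω | A t ω = av} (Lpast L (t : ℕ) l ∩ Apast A (t : ℕ) b))
    -- (A3′) restricted positivity
    (hA3' : ∀ t : Fin K, K - m ≤ (t : ℕ) →
      ∀ (av : Bool) (l : Fin K → 𝓛) (b : Fin K → Bool),
        0 < P (Lpast L (t : ℕ) l ∩ Apast A (t : ℕ) b) →
        0 < cP P {ω | A t ω = av} (Lpast L (t : ℕ) l ∩ Apast A (t : ℕ) b)) :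
    ∀ (as bs : Fin K → Bool) (B : Set ℝ), MeasurableSet B →
      (∫ ω, Wrsw P A L m ω * (if Ypotm A m Ypot as ω ∈ B then (1 : ℝ) else 0) *
          (if ω ∈ EtrV A m bs then (1 : ℝ) else 0) ∂P) =
        (P {ω | Ypotm A m Ypot as ω ∈ B}).toReal * (P (EtrV A m bs)).toReal :=
  rsw_pseudopopulation_factorization_general P A L hA hL Ypot hYpm hA2' hA3'

end MSMPaper
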